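/- arXiv:2010.10569 — 3 statements merged into one kernel-verified Lean document; each statement's English description precedes it below -/
import Mathlib

section
/- Monotonicity of the Beta CDF in its first parameter: for fixed β > 0 and y ∈ (0,1), if 0 < α₂ < α₁ then F^{Beta}_{α₁, β}(y) < F^{Beta}_{α₂, β}(y), i.e., increasing the first shape parameter strictly decreases the CDF. -/
/-!
The two Beta integrands differ by the factor `θ ^ (α₁ - α₂)`, which is at most `k = y ^ (α₁ - α₂)`
on `(0, y)` and exceeds `k` on `(y, 1)`. Writing `Aᵢ`, `Gᵢ` for the integrals of the `i`-th
integrand over `[0, y]` and `[y, 1]`, this gives `A₁ ≤ k A₂` and `k G₂ < G₁`, hence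
`A₁ G₂ < A₂ G₁`, which is `A₁ / (A₁ + G₁) < A₂ / (A₂ + G₂)`.
-/

open MeasureTheory Real intervalIntegral

/-- CDF of the Beta(a, b) distribution. -/
noncomputable def betaCDF (a b y : ℝ) : ℝ :=
  (∫ θ in (0:ℝ)..y, θ ^ (a - 1) * (1 - θ) ^ (b - 1)) /
    (∫ u in (0:ℝ)..1, u ^ (a - 1) * (1 - u) ^ (b - 1))

open Set

lemma intervalIntegrable_rpow_mul_one_sub_rpow_zero_half {a : ℝ} (ha : -1 < a) (b : ℝ) :
    IntervalIntegrable (fun θ : ℝ => θ ^ a * (1 - θ) ^ b) volume 0 (1 / 2) := by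
  refine (intervalIntegrable_rpow' ha).mul_continuousOn
    ((continuousOn_const.sub continuousOn_id).rpow_const fun θ hθ => Or.inl ?_)
  rw [uIcc_of_le (by norm_num)] at hθ
  exact (sub_pos.2 (hθ.2.trans_lt (by norm_num))).ne'

lemma intervalIntegrable_rpow_mul_one_sub_rpow {a b : ℝ} (ha : -1 < a) (hb : -1 < b) :
    IntervalIntegrable (fun θ : ℝ => θ ^ a * (1 - θ) ^ b) volume 0 1 := by
  have hright : IntervalIntegrable (fun θ : ℝ => θ ^ a * (1 - θ) ^ b) volume (1 / 2) 1 := by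
    -- the reflection `θ ↦ 1 - θ` of the left half, with `a` and `b` swapped
    have := (intervalIntegrable_rpow_mul_one_sub_rpow_zero_half hb a).comp_sub_left 1
    norm_num at this
    simpa only [mul_comm] using this.symm
  exact (intervalIntegrable_rpow_mul_one_sub_rpow_zero_half ha b).trans hright

lemma rpow_mul_one_sub_rpow_pos (a b : ℝ) {θ : ℝ} (hθ : θ ∈ Ioo (0 : ℝ) 1) :
    0 < θ ^ a * (1 - θ) ^ b :=
  mul_pos (rpow_pos_of_pos hθ.1 a) (rpow_pos_of_pos (sub_pos.2 hθ.2) b)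

theorem integral_div_integral_lt_of_single_crossing {f g : ℝ → ℝ} {a b c k : ℝ}
    (hab : a < b) (hbc : b < c)
    (hf : IntervalIntegrable f volume a c) (hg : IntervalIntegrable g volume a c)
    (hf_pos : ∀ x ∈ Ioo a c, 0 < f x) (hg_pos : ∀ x ∈ Ioo a c, 0 < g x)
    (hle : ∀ x ∈ Ioo a b, f x ≤ k * g x) (hlt : ∀ x ∈ Ioo b c, k * g x < f x) :
    (∫ x in a..b, f x) / (∫ x in a..c, f x) < (∫ x in a..b, g x) / (∫ x in a..c, g x) := by
  have hsub_left : uIcc a b ⊆ uIcc a c := uIcc_subset_uIcc_left (Icc_subset_uIcc ⟨hab.le, hbc.le⟩)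
  have hsub_right : uIcc b c ⊆ uIcc a c :=
    uIcc_subset_uIcc_right (Icc_subset_uIcc ⟨hab.le, hbc.le⟩)
  have hf₁ := hf.mono_set hsub_left
  have hg₁ := hg.mono_set hsub_left
  have hf₂ := hf.mono_set hsub_right
  have hg₂ := hg.mono_set hsub_right
  have hf_total : 0 < ∫ x in a..c, f x := intervalIntegral_pos_of_pos_on hf hf_pos (hab.trans hbc)
  have hg_total : 0 < ∫ x in a..c, g x := intervalIntegral_pos_of_pos_on hg hg_pos (hab.trans hbc)
  have hg_left : 0 < ∫ x in a..b, g x :=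
    intervalIntegral_pos_of_pos_on hg₁ (fun x hx => hg_pos x ⟨hx.1, hx.2.trans hbc⟩) hab
  have hg_right : 0 < ∫ x in b..c, g x :=
    intervalIntegral_pos_of_pos_on hg₂ (fun x hx => hg_pos x ⟨hab.trans hx.1, hx.2⟩) hbc
  have hleft : ∫ x in a..b, f x ≤ k * ∫ x in a..b, g x := by
    rw [← intervalIntegral.integral_const_mul]
    exact integral_mono_on_of_le_Ioo hab.le hf₁ (hg₁.const_mul k) hle
  have hright : k * ∫ x in b..c, g x < ∫ x in b..c, f x := by
    have := intervalIntegral_pos_of_pos_on (hf₂.sub (hg₂.const_mul k))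
      (fun x hx => sub_pos.2 (hlt x hx)) hbc
    rwa [integral_sub hf₂ (hg₂.const_mul k), intervalIntegral.integral_const_mul, sub_pos] at this
  rw [div_lt_div_iff₀ hf_total hg_total, ← integral_add_adjacent_intervals hf₁ hf₂,
    ← integral_add_adjacent_intervals hg₁ hg₂]
  nlinarith [mul_le_mul_of_nonneg_right hleft hg_right.le, mul_lt_mul_of_pos_left hright hg_left]

theorem betaCDF_strict_anti_in_first_param
    (α₁ α₂ β y : ℝ) (hβ : 0 < β) (hy : y ∈ Set.Ioo (0:ℝ) 1)
    (h₂ : 0 < α₂) (h₁₂ : α₂ < α₁) :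
    betaCDF α₁ β y < betaCDF α₂ β y := by
  obtain ⟨hy0, hy1⟩ := hy
  have hδ : 0 < α₁ - α₂ := sub_pos.2 h₁₂
  have hratio : ∀ θ : ℝ, 0 < θ → θ ^ (α₁ - 1) * (1 - θ) ^ (β - 1) =
      θ ^ (α₁ - α₂) * (θ ^ (α₂ - 1) * (1 - θ) ^ (β - 1)) := fun θ hθ => by
    rw [← mul_assoc, ← rpow_add hθ]
    ring_nf
  have hpos : ∀ a : ℝ, ∀ θ ∈ Ioo (0 : ℝ) 1, 0 < θ ^ (a - 1) * (1 - θ) ^ (β - 1) :=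
    fun a θ hθ => rpow_mul_one_sub_rpow_pos _ _ hθ
  refine integral_div_integral_lt_of_single_crossing (k := y ^ (α₁ - α₂)) hy0 hy1
    (intervalIntegrable_rpow_mul_one_sub_rpow (by linarith) (by linarith))
    (intervalIntegrable_rpow_mul_one_sub_rpow (by linarith) (by linarith))
    (hpos α₁) (hpos α₂) (fun θ hθ => ?_) (fun θ hθ => ?_)
  · rw [hratio θ hθ.1]
    exact mul_le_mul_of_nonneg_right (rpow_le_rpow hθ.1.le hθ.2.le hδ.le)
      (hpos α₂ θ ⟨hθ.1, hθ.2.trans hy1⟩).le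
  · rw [hratio θ (hy0.trans hθ.1)]
    exact mul_lt_mul_of_pos_right (rpow_lt_rpow hy0.le hθ.1 hδ)
      (hpos α₂ θ ⟨hy0.trans hθ.1, hθ.2⟩)
end

section
/- Monotonicity of the Beta CDF in its second parameter: for fixed α > 0 and y ∈ (0,1), if 0 < β₂ < β₁ then F^{Beta}_{α, β₂}(y) < F^{Beta}_{α, β₁}(y), i.e., increasing the second shape parameter strictly increases the CDF. -/
/-!
The Beta(α, β₁) density is the Beta(α, β₂) density reweighted by `(1 - θ) ^ (β₁ - β₂)`, a strictly
decreasing function of `θ`. A strictly decreasing likelihood ratio shifts mass to the left: with `c`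
the ratio at `y`, the mass of the first density on `[0, y]` exceeds `c` times that of the second,
while on `[y, 1]` it falls short of it, and this forces the normalized mass of `[0, y]` to increase.
-/

open MeasureTheory Real intervalIntegral

open Set

lemma div_add_lt_div_add_of_mul_lt {A₁ B₁ A₂ B₂ c : ℝ} (hA₂ : 0 < A₂) (hB₁ : 0 < B₁)
    (hB₂ : 0 < B₂) (hA : c * A₂ < A₁) (hB : B₁ < c * B₂) :
    A₂ / (A₂ + B₂) < A₁ / (A₁ + B₁) := by
  have hc : 0 < c := pos_of_mul_pos_left (hB₁.trans hB) hB₂.le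
  have hA₁ : 0 < A₁ := (mul_pos hc hA₂).trans hA
  rw [div_lt_div_iff₀ (by positivity) (by positivity)]
  nlinarith [mul_lt_mul_of_pos_left hB hA₂, mul_lt_mul_of_pos_right hA hB₂]

lemma integral_lt_integral_of_forall_lt {f g : ℝ → ℝ} {s t : ℝ} (hst : s < t)
    (hf : IntervalIntegrable f volume s t) (hg : IntervalIntegrable g volume s t)
    (h : ∀ x ∈ Ioo s t, f x < g x) : ∫ x in s..t, f x < ∫ x in s..t, g x := by
  have := intervalIntegral_pos_of_pos_on (hg.sub hf) (fun x hx ↦ sub_pos.mpr (h x hx)) hst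
  rwa [intervalIntegral.integral_sub hg hf, sub_pos] at this

theorem integral_div_integral_lt_of_strictAntiOn_div {f₁ f₂ : ℝ → ℝ} {a b y : ℝ}
    (hy : y ∈ Ioo a b) (hf₁ : IntervalIntegrable f₁ volume a b)
    (hf₂ : IntervalIntegrable f₂ volume a b) (hf₁_pos : ∀ x ∈ Ioo a b, 0 < f₁ x)
    (hf₂_pos : ∀ x ∈ Ioo a b, 0 < f₂ x) (hratio : StrictAntiOn (fun x ↦ f₁ x / f₂ x) (Ioo a b)) :
    (∫ x in a..y, f₂ x) / (∫ x in a..b, f₂ x) < (∫ x in a..y, f₁ x) / (∫ x in a..b, f₁ x) := by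
  obtain ⟨hay, hyb⟩ := hy
  have hy : y ∈ uIcc a b := Icc_subset_uIcc ⟨hay.le, hyb.le⟩
  have hf₁l := hf₁.mono_set (uIcc_subset_uIcc_left hy)
  have hf₂l := hf₂.mono_set (uIcc_subset_uIcc_left hy)
  have hf₁r := hf₁.mono_set (uIcc_subset_uIcc_right hy)
  have hf₂r := hf₂.mono_set (uIcc_subset_uIcc_right hy)
  set c := f₁ y / f₂ y
  have hA : c * ∫ x in a..y, f₂ x < ∫ x in a..y, f₁ x := by
    rw [← intervalIntegral.integral_const_mul]
    refine integral_lt_integral_of_forall_lt hay (hf₂l.const_mul c) hf₁l fun x hx ↦ ?_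
    have hx' : x ∈ Ioo a b := ⟨hx.1, hx.2.trans hyb⟩
    exact (lt_div_iff₀ (hf₂_pos x hx')).mp (hratio hx' ⟨hay, hyb⟩ hx.2)
  have hB : ∫ x in y..b, f₁ x < c * ∫ x in y..b, f₂ x := by
    rw [← intervalIntegral.integral_const_mul]
    refine integral_lt_integral_of_forall_lt hyb hf₁r (hf₂r.const_mul c) fun x hx ↦ ?_
    have hx' : x ∈ Ioo a b := ⟨hay.trans hx.1, hx.2⟩
    exact (div_lt_iff₀ (hf₂_pos x hx')).mp (hratio ⟨hay, hyb⟩ hx' hx.1)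
  rw [← integral_add_adjacent_intervals hf₁l hf₁r, ← integral_add_adjacent_intervals hf₂l hf₂r]
  exact div_add_lt_div_add_of_mul_lt
    (intervalIntegral_pos_of_pos_on hf₂l (fun x hx ↦ hf₂_pos x ⟨hx.1, hx.2.trans hyb⟩) hay)
    (intervalIntegral_pos_of_pos_on hf₁r (fun x hx ↦ hf₁_pos x ⟨hay.trans hx.1, hx.2⟩) hyb)
    (intervalIntegral_pos_of_pos_on hf₂r (fun x hx ↦ hf₂_pos x ⟨hay.trans hx.1, hx.2⟩) hyb) hA hB

lemma intervalIntegrable_beta_integrand {a b : ℝ} (ha : 0 < a) (hb : 0 < b) :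
    IntervalIntegrable (fun θ : ℝ ↦ θ ^ (a - 1) * (1 - θ) ^ (b - 1)) volume 0 1 := by
  refine (Complex.betaIntegral_convergent (u := a) (v := b) (by simpa) (by simpa)).norm.congr_uIoo
    fun θ hθ ↦ ?_
  rw [uIoo_of_le zero_le_one] at hθ
  have h1θ : 0 < 1 - θ := sub_pos.mpr hθ.2
  simp only [norm_mul]
  rw [show (1 : ℂ) - θ = ((1 - θ : ℝ) : ℂ) by push_cast; rfl,
    Complex.norm_cpow_eq_rpow_re_of_pos hθ.1, Complex.norm_cpow_eq_rpow_re_of_pos h1θ]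
  simp

lemma beta_integrand_pos (a b : ℝ) {θ : ℝ} (hθ : θ ∈ Ioo (0 : ℝ) 1) :
    0 < θ ^ (a - 1) * (1 - θ) ^ (b - 1) :=
  mul_pos (rpow_pos_of_pos hθ.1 _) (rpow_pos_of_pos (sub_pos.mpr hθ.2) _)

lemma beta_integrand_div_beta_integrand (a b₁ b₂ : ℝ) {θ : ℝ} (hθ : θ ∈ Ioo (0 : ℝ) 1) :
    θ ^ (a - 1) * (1 - θ) ^ (b₁ - 1) / (θ ^ (a - 1) * (1 - θ) ^ (b₂ - 1)) =
      (1 - θ) ^ (b₁ - b₂) := by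
  rw [mul_div_mul_left _ _ (rpow_pos_of_pos hθ.1 _).ne', ← rpow_sub (sub_pos.mpr hθ.2),
    sub_sub_sub_cancel_right]

lemma strictAntiOn_beta_integrand_div {a b₁ b₂ : ℝ} (hb : b₂ < b₁) :
    StrictAntiOn (fun θ : ℝ ↦ θ ^ (a - 1) * (1 - θ) ^ (b₁ - 1) / (θ ^ (a - 1) * (1 - θ) ^ (b₂ - 1)))
      (Ioo 0 1) := by
  intro θ hθ η hη hθη
  simp only [beta_integrand_div_beta_integrand a b₁ b₂ hθ,
    beta_integrand_div_beta_integrand a b₁ b₂ hη]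
  exact rpow_lt_rpow (sub_pos.mpr hη.2).le (by linarith) (sub_pos.mpr hb)

theorem betaCDF_strict_mono_in_second_param
    (α β₁ β₂ y : ℝ) (hα : 0 < α) (hy : y ∈ Set.Ioo (0:ℝ) 1)
    (h₂ : 0 < β₂) (h₁₂ : β₂ < β₁) :
    betaCDF α β₂ y < betaCDF α β₁ y :=
  integral_div_integral_lt_of_strictAntiOn_div hy
    (intervalIntegrable_beta_integrand hα (h₂.trans h₁₂)) (intervalIntegrable_beta_integrand hα h₂)
    (fun _ ↦ beta_integrand_pos α β₁) (fun _ ↦ beta_integrand_pos α β₂)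
    (strictAntiOn_beta_integrand_div h₁₂)
end

section
/- Geometric ergodicity bound for doubly stochastic matrices accumulated over time: if W is an N×N doubly stochastic matrix corresponding to a strongly connected network with second-largest singular value σ₂(W) < 1, then for every i and t, ∑_{τ=1}^{t} ∑_{j=1}^{N} |(W^{t-τ})_{ij} - 1/N| ≤ 4 log N / (1 - σ₂(W)). -/
/-!
Write `σ = secondSingular W`. Row `i` of `W ^ k` minus the uniform vector is `(Wᵀ) ^ k (eᵢ - 𝟙 / N)`.
`Wᵀ` preserves the hyperplane `∑ x = 0` and contracts it by `σ`, because
`‖Wᵀ x‖² = ⟨x, W Wᵀ x⟩ ≤ σ ‖x‖ ‖Wᵀ x‖`; hence the ℓ¹ norm of that deviation is at most `√N σ ^ k`,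
and it is trivially at most `2`. Interpolating, `min 2 (√N σ ^ k) ≤ 2 ^ (1 - α) √N ^ α (σ ^ α) ^ k`,
and summing the geometric series with `1 - σ ^ α ≥ α (1 - σ)` bounds the accumulated deviation by
`2 ^ (1 - α) √N ^ α / (α (1 - σ))`. The choice `α = 1 / log N` (`α = 1` when `N ≤ e`) makes the
constant at most `4 log N`.
-/

open Matrix Real

/-- Second-largest singular value of a doubly stochastic matrix, characterized as
the largest gain of `W` on vectors orthogonal to the all-ones vector. -/
noncomputable def secondSingular {N : ℕ} (W : Matrix (Fin N) (Fin N) ℝ) : ℝ :=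
  sSup {r | ∃ x : Fin N → ℝ, (∑ i, x i) = 0 ∧ (∑ i, (x i) ^ 2) = 1 ∧
    r = Real.sqrt (∑ i, (W.mulVec x i) ^ 2)}

open Finset

namespace Matrix

variable {n : Type*} [Fintype n] [DecidableEq n] {M : Matrix n n ℝ}

lemma sq_mulVec_le_mulVec_sq (hM : M ∈ doublyStochastic ℝ n) (x : n → ℝ) (i : n) :
    (M *ᵥ x) i ^ 2 ≤ (M *ᵥ x ^ 2) i := by
  have h := sum_sq_le_sum_mul_sum_of_sq_le_mul univ (r := fun j ↦ M i j * x j)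
    (fun j _ ↦ nonneg_of_mem_doublyStochastic hM)
    (fun j _ ↦ mul_nonneg (nonneg_of_mem_doublyStochastic hM) (sq_nonneg (x j)))
    (fun j _ ↦ (by ring : (M i j * x j) ^ 2 = M i j * (M i j * x j ^ 2)).le)
  simpa [sum_row_of_mem_doublyStochastic hM, mulVec, dotProduct] using h

lemma sum_sq_mulVec_le (hM : M ∈ doublyStochastic ℝ n) (x : n → ℝ) :
    ∑ i, (M *ᵥ x) i ^ 2 ≤ ∑ i, x i ^ 2 :=
  calc ∑ i, (M *ᵥ x) i ^ 2 ≤ ∑ i, (M *ᵥ x ^ 2) i :=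
        sum_le_sum fun i _ ↦ sq_mulVec_le_mulVec_sq hM x i
    _ = ∑ i, x i ^ 2 := sum_mulVec_of_mem_doublyStochastic hM

lemma sum_abs_sub_one_div_card_le_two (hM : M ∈ doublyStochastic ℝ n) (i : n) :
    ∑ j, |M i j - 1 / Fintype.card n| ≤ 2 := by
  calc ∑ j, |M i j - 1 / Fintype.card n| ≤ ∑ j, (M i j + 1 / Fintype.card n) :=
        sum_le_sum fun j _ ↦ by
          have := nonneg_of_mem_doublyStochastic hM (i := i) (j := j)
          have : (0 : ℝ) ≤ 1 / Fintype.card n := by positivity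
          exact abs_le.2 ⟨by linarith, by linarith⟩
    _ = 2 := by
        have : (Fintype.card n : ℝ) ≠ 0 := Nat.cast_ne_zero.2 (Fintype.card_pos_iff.2 ⟨i⟩).ne'
        rw [sum_add_distrib, sum_row_of_mem_doublyStochastic hM, sum_const, card_univ,
          nsmul_eq_mul, mul_one_div_cancel this, one_add_one_eq_two]

end Matrix

lemma sum_abs_le_sqrt_card_mul_sqrt_sum_sq {ι : Type*} [Fintype ι] (y : ι → ℝ) :
    ∑ j, |y j| ≤ √(Fintype.card ι) * √(∑ j, y j ^ 2) := by
  rw [← Real.sqrt_mul (Nat.cast_nonneg _)]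
  refine Real.le_sqrt_of_sq_le ?_
  simpa [sq_abs] using sq_sum_le_card_mul_sum_sq (s := univ) (f := fun j ↦ |y j|)

lemma min_le_rpow_mul_rpow {a b α : ℝ} (ha : 0 ≤ a) (hb : 0 ≤ b) (hα₀ : 0 ≤ α) (hα₁ : α ≤ 1) :
    min a b ≤ a ^ (1 - α) * b ^ α := by
  have hm : 0 ≤ min a b := le_min ha hb
  calc min a b = min a b ^ (1 - α) * min a b ^ α := by
        rw [← Real.rpow_add' hm (by norm_num), sub_add_cancel, Real.rpow_one]
    _ ≤ a ^ (1 - α) * b ^ α := by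
        gcongr
        exacts [min_le_left a b, min_le_right a b]

lemma mul_one_sub_le_one_sub_rpow {σ α : ℝ} (hσ : 0 ≤ σ) (hα₀ : 0 ≤ α) (hα₁ : α ≤ 1) :
    α * (1 - σ) ≤ 1 - σ ^ α := by
  have := rpow_one_add_le_one_add_mul_self (s := σ - 1) (by linarith) hα₀ hα₁
  rw [add_sub_cancel] at this
  linarith

lemma Finset.sum_Icc_one_sub_eq_sum_range {M : Type*} [AddCommMonoid M] (f : ℕ → M) (t : ℕ) :
    ∑ τ ∈ Icc 1 t, f (t - τ) = ∑ k ∈ range t, f k := by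
  rw [← Finset.Ico_add_one_right_eq_Icc, sum_Ico_reflect f 1 le_rfl, range_eq_Ico]
  simp

lemma sum_single_sub_eq_zero {n : Type*} [Fintype n] [DecidableEq n] (i : n) :
    ∑ j, (Pi.single i 1 - (1 / Fintype.card n : ℝ) • 1 : n → ℝ) j = 0 := by
  have : (Fintype.card n : ℝ) ≠ 0 := Nat.cast_ne_zero.2 (Fintype.card_pos_iff.2 ⟨i⟩).ne'
  simp [sum_sub_distrib, this]

lemma sum_sq_single_sub_le_one {n : Type*} [Fintype n] [DecidableEq n] (i : n) :
    ∑ j, (Pi.single i 1 - (1 / Fintype.card n : ℝ) • 1 : n → ℝ) j ^ 2 ≤ 1 := by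
  set x : n → ℝ := Pi.single i 1 - (1 / Fintype.card n : ℝ) • 1
  have hx : ∑ j, x j ^ 2 = x i := by
    calc ∑ j, x j ^ 2 = x ⬝ᵥ x := by simp only [dotProduct, sq]
      _ = x i - (1 / Fintype.card n : ℝ) * ∑ j, x j := by
          nth_rw 2 [show x = _ from rfl]
          rw [dotProduct_sub, dotProduct_smul, dotProduct_single_one, dotProduct_one, smul_eq_mul]
      _ = x i := by rw [sum_single_sub_eq_zero, mul_zero, sub_zero]
  rw [hx]
  have : (0 : ℝ) ≤ 1 / Fintype.card n := by positivity
  simp only [x, Pi.sub_apply, Pi.single_eq_same, Pi.smul_apply, Pi.one_apply, smul_eq_mul]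
  linarith

section SecondSingular

variable {N : ℕ} {W : Matrix (Fin N) (Fin N) ℝ}

lemma secondSingular_nonneg (W : Matrix (Fin N) (Fin N) ℝ) : 0 ≤ secondSingular W :=
  Real.sSup_nonneg <| by rintro _ ⟨x, -, -, rfl⟩; exact Real.sqrt_nonneg _

lemma sqrt_sum_sq_mulVec_le_secondSingular (hW : W ∈ doublyStochastic ℝ (Fin N))
    {x : Fin N → ℝ} (hx₀ : ∑ i, x i = 0) (hx₁ : ∑ i, x i ^ 2 = 1) :
    √(∑ i, (W *ᵥ x) i ^ 2) ≤ secondSingular W := by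
  refine le_csSup ⟨1, ?_⟩ ⟨x, hx₀, hx₁, rfl⟩
  rintro _ ⟨y, -, hy, rfl⟩
  exact Real.sqrt_le_one.2 (hy ▸ Matrix.sum_sq_mulVec_le hW y)

lemma sum_sq_mulVec_le_secondSingular_sq_mul (hW : W ∈ doublyStochastic ℝ (Fin N))
    {x : Fin N → ℝ} (hx : ∑ i, x i = 0) :
    ∑ i, (W *ᵥ x) i ^ 2 ≤ secondSingular W ^ 2 * ∑ i, x i ^ 2 := by
  set S := ∑ i, x i ^ 2
  obtain hS | hS := (sum_nonneg fun i _ ↦ sq_nonneg (x i) : 0 ≤ S).eq_or_lt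
  · have : x = 0 := dotProduct_self_eq_zero.1 (by simpa [dotProduct, sq] using hS.symm)
    simp [this, S]
  set c := (√S)⁻¹
  have hc : c ^ 2 * S = 1 := by rw [inv_pow, Real.sq_sqrt hS.le, inv_mul_cancel₀ hS.ne']
  have hsum_sq_smul : ∀ v : Fin N → ℝ, ∑ i, (c • v) i ^ 2 = c ^ 2 * ∑ i, v i ^ 2 := fun v ↦ by
    simp [mul_pow, mul_sum]
  have key := sqrt_sum_sq_mulVec_le_secondSingular hW (x := c • x)
    (by simp [← mul_sum, hx]) (by rw [hsum_sq_smul, hc])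
  rw [mulVec_smul, hsum_sq_smul, Real.sqrt_le_left (secondSingular_nonneg W)] at key
  calc ∑ i, (W *ᵥ x) i ^ 2 = S * (c ^ 2 * ∑ i, (W *ᵥ x) i ^ 2) := by
        rw [← mul_assoc, mul_comm S, hc, one_mul]
    _ ≤ S * secondSingular W ^ 2 := by gcongr
    _ = secondSingular W ^ 2 * S := mul_comm _ _

lemma sum_sq_transpose_mulVec_le (hW : W ∈ doublyStochastic ℝ (Fin N))
    {x : Fin N → ℝ} (hx : ∑ i, x i = 0) :
    ∑ i, (Wᵀ *ᵥ x) i ^ 2 ≤ secondSingular W ^ 2 * ∑ i, x i ^ 2 := by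
  set y := Wᵀ *ᵥ x
  set A := ∑ i, y i ^ 2
  have hy : ∑ i, y i = 0 :=
    (sum_mulVec_of_mem_doublyStochastic (transpose_mem_doublyStochastic_iff.2 hW)).trans hx
  have hA : A = x ⬝ᵥ (W *ᵥ y) := by
    rw [dotProduct_mulVec, ← mulVec_transpose]
    simp only [A, y, dotProduct, sq]
  have hA_sq : A ^ 2 ≤ (∑ i, x i ^ 2) * (secondSingular W ^ 2 * A) :=
    calc A ^ 2 = (x ⬝ᵥ (W *ᵥ y)) ^ 2 := by rw [hA]
      _ ≤ (∑ i, x i ^ 2) * ∑ i, (W *ᵥ y) i ^ 2 := sum_mul_sq_le_sq_mul_sq _ _ _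
      _ ≤ _ := by gcongr; exact sum_sq_mulVec_le_secondSingular_sq_mul hW hy
  have hA₀ : 0 ≤ A := sum_nonneg fun i _ ↦ sq_nonneg (y i)
  have hS₀ : 0 ≤ secondSingular W ^ 2 * ∑ i, x i ^ 2 :=
    mul_nonneg (sq_nonneg _) (sum_nonneg fun i _ ↦ sq_nonneg (x i))
  nlinarith

lemma sum_sq_transpose_pow_mulVec_le (hW : W ∈ doublyStochastic ℝ (Fin N)) (k : ℕ)
    {x : Fin N → ℝ} (hx : ∑ i, x i = 0) :
    ∑ i, (Wᵀ ^ k *ᵥ x) i ^ 2 ≤ (secondSingular W ^ k) ^ 2 * ∑ i, x i ^ 2 := by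
  induction k with
  | zero => simp
  | succ k ih =>
    have hk : ∑ i, (Wᵀ ^ k *ᵥ x) i = 0 := (sum_mulVec_of_mem_doublyStochastic
      (pow_mem (transpose_mem_doublyStochastic_iff.2 hW) k)).trans hx
    rw [pow_succ', ← mulVec_mulVec]
    calc _ ≤ secondSingular W ^ 2 * ∑ i, (Wᵀ ^ k *ᵥ x) i ^ 2 := sum_sq_transpose_mulVec_le hW hk
      _ ≤ secondSingular W ^ 2 * ((secondSingular W ^ k) ^ 2 * ∑ i, x i ^ 2) := by gcongr
      _ = (secondSingular W ^ (k + 1)) ^ 2 * ∑ i, x i ^ 2 := by ring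

lemma transpose_pow_mulVec_single_sub (hW : W ∈ doublyStochastic ℝ (Fin N)) (k : ℕ)
    (i : Fin N) :
    Wᵀ ^ k *ᵥ (Pi.single i 1 - (1 / Fintype.card (Fin N) : ℝ) • 1) =
      fun j ↦ (W ^ k) i j - 1 / N := by
  rw [mulVec_sub, mulVec_smul, ← transpose_pow, mulVec_single_one,
    mulVec_one_of_mem_doublyStochastic (transpose_mem_doublyStochastic_iff.2 (pow_mem hW k))]
  ext j
  simp [-transpose_pow]

lemma sum_abs_pow_sub_le_sqrt_mul_secondSingular_pow (hW : W ∈ doublyStochastic ℝ (Fin N))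
    (k : ℕ) (i : Fin N) :
    ∑ j, |(W ^ k) i j - 1 / N| ≤ √N * secondSingular W ^ k := by
  set x : Fin N → ℝ := Pi.single i 1 - (1 / Fintype.card (Fin N) : ℝ) • 1
  have hσk : 0 ≤ secondSingular W ^ k := pow_nonneg (secondSingular_nonneg W) k
  calc ∑ j, |(W ^ k) i j - 1 / N| = ∑ j, |(Wᵀ ^ k *ᵥ x) j| := by
        rw [transpose_pow_mulVec_single_sub hW]
    _ ≤ √N * √(∑ j, (Wᵀ ^ k *ᵥ x) j ^ 2) := by
        simpa using sum_abs_le_sqrt_card_mul_sqrt_sum_sq (Wᵀ ^ k *ᵥ x)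
    _ ≤ √N * √((secondSingular W ^ k) ^ 2 * 1) := by
        gcongr
        exact (sum_sq_transpose_pow_mulVec_le hW k (sum_single_sub_eq_zero i)).trans
          (by gcongr; exact sum_sq_single_sub_le_one i)
    _ = √N * secondSingular W ^ k := by rw [mul_one, Real.sqrt_sq hσk]

lemma sum_Icc_sum_abs_pow_sub_le (hW : W ∈ doublyStochastic ℝ (Fin N))
    (hσ : secondSingular W < 1) {α : ℝ} (hα₀ : 0 < α) (hα₁ : α ≤ 1) (i : Fin N) (t : ℕ) :
    ∑ τ ∈ Icc 1 t, ∑ j, |(W ^ (t - τ)) i j - 1 / N|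
      ≤ 2 ^ (1 - α) * √N ^ α / α / (1 - secondSingular W) := by
  set σ := secondSingular W
  set C := (2 : ℝ) ^ (1 - α) * √N ^ α
  have hσ₀ : 0 ≤ σ := secondSingular_nonneg W
  have hσα : σ ^ α < 1 := Real.rpow_lt_one hσ₀ hσ hα₀
  have hterm (k : ℕ) : ∑ j, |(W ^ k) i j - 1 / N| ≤ C * (σ ^ α) ^ k :=
    calc ∑ j, |(W ^ k) i j - 1 / N| ≤ min 2 (√N * σ ^ k) :=
          le_min (by simpa using Matrix.sum_abs_sub_one_div_card_le_two (pow_mem hW k) i)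
            (sum_abs_pow_sub_le_sqrt_mul_secondSingular_pow hW k i)
      _ ≤ 2 ^ (1 - α) * (√N * σ ^ k) ^ α :=
          min_le_rpow_mul_rpow zero_le_two (by positivity) hα₀.le hα₁
      _ = C * (σ ^ α) ^ k := by
          rw [Real.mul_rpow (Real.sqrt_nonneg _) (by positivity), Real.rpow_pow_comm hσ₀, mul_assoc]
  calc ∑ τ ∈ Icc 1 t, ∑ j, |(W ^ (t - τ)) i j - 1 / N|
        = ∑ k ∈ range t, ∑ j, |(W ^ k) i j - 1 / N| :=
          sum_Icc_one_sub_eq_sum_range (fun k ↦ ∑ j, |(W ^ k) i j - 1 / N|) t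
    _ ≤ C * ∑ k ∈ range t, (σ ^ α) ^ k := by
          rw [mul_sum]
          exact sum_le_sum fun k _ ↦ hterm k
    _ ≤ C * (1 / (1 - σ ^ α)) := by
          refine mul_le_mul_of_nonneg_left ?_ (by positivity)
          have := geom_sum_Ico_le_of_lt_one (m := 0) (n := t) (Real.rpow_nonneg hσ₀ α) hσα
          rwa [← range_eq_Ico, pow_zero] at this
    _ ≤ C / (α * (1 - σ)) := by
          rw [mul_one_div]
          exact div_le_div_of_nonneg_left (by positivity) (mul_pos hα₀ (by linarith))
            (mul_one_sub_le_one_sub_rpow hσ₀ hα₀.le hα₁)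
    _ = C / α / (1 - σ) := by rw [div_div]

end SecondSingular

lemma exists_two_rpow_mul_sqrt_rpow_div_le_four_mul_log {x : ℝ} (hx : 2 ≤ x) :
    ∃ α : ℝ, 0 < α ∧ α ≤ 1 ∧ 2 ^ (1 - α) * √x ^ α / α ≤ 4 * log x := by
  by_cases hlog : log x ≤ 1
  · refine ⟨1, one_pos, le_rfl, ?_⟩
    have hlog₂ : 0.6931471803 < log x :=
      Real.log_two_gt_d9.trans_le (Real.log_le_log two_pos hx)
    have hx₄ : x ≤ 2 ^ 2 := by
      rw [Real.log_le_iff_le_exp (by linarith)] at hlog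
      linarith [Real.exp_one_lt_d9]
    have : √x ≤ 2 := (Real.sqrt_le_left zero_le_two).2 hx₄
    simp only [sub_self, Real.rpow_zero, Real.rpow_one, one_mul, div_one]
    linarith
  · rw [not_le] at hlog
    have hlog₀ : 0 < log x := one_pos.trans hlog
    refine ⟨(log x)⁻¹, inv_pos.2 hlog₀, inv_le_one_of_one_le₀ hlog.le, ?_⟩
    have hsqrt : √x ^ (log x)⁻¹ = exp (1 / 2) := by
      rw [Real.rpow_def_of_pos (Real.sqrt_pos.2 (by linarith)), Real.log_sqrt (by linarith)]
      field_simp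
    have hexp : exp (1 / 2) ≤ 2 := by
      have : exp (1 / 2) ^ 2 = exp 1 := by rw [← Real.exp_nat_mul]; norm_num
      nlinarith [Real.exp_one_lt_d9, Real.exp_pos (1 / 2)]
    have htwo : (2 : ℝ) ^ (1 - (log x)⁻¹) ≤ 2 := by
      simpa using Real.rpow_le_rpow_of_exponent_le one_le_two
        (by linarith [inv_pos.2 hlog₀] : 1 - (log x)⁻¹ ≤ 1)
    rw [hsqrt, div_inv_eq_mul]
    gcongr
    nlinarith [Real.rpow_nonneg zero_le_two (1 - (log x)⁻¹)]

theorem consensus_geometric_ergodicity_general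
    (N : ℕ) (hN : 2 ≤ N) (W : Matrix (Fin N) (Fin N) ℝ)
    (hnonneg : ∀ i j, 0 ≤ W i j)
    (hrow : ∀ i, ∑ j, W i j = 1)
    (hcol : ∀ j, ∑ i, W i j = 1)
    (hσ : secondSingular W < 1) :
    ∀ (i : Fin N) (t : ℕ),
      ∑ τ ∈ Finset.Icc 1 t, ∑ j, |(W ^ (t - τ)) i j - 1 / N|
        ≤ 4 * Real.log N / (1 - secondSingular W) := by
  intro i t
  have hW : W ∈ doublyStochastic ℝ (Fin N) :=
    mem_doublyStochastic_iff_sum.2 ⟨hnonneg, hrow, hcol⟩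
  obtain ⟨α, hα₀, hα₁, hα⟩ :=
    exists_two_rpow_mul_sqrt_rpow_div_le_four_mul_log (x := N) (by exact_mod_cast hN)
  calc ∑ τ ∈ Finset.Icc 1 t, ∑ j, |(W ^ (t - τ)) i j - 1 / N|
      ≤ 2 ^ (1 - α) * √N ^ α / α / (1 - secondSingular W) :=
        sum_Icc_sum_abs_pow_sub_le hW hσ hα₀ hα₁ i t
    _ ≤ 4 * Real.log N / (1 - secondSingular W) :=
        div_le_div_of_nonneg_right hα (sub_nonneg.2 hσ.le)

theorem consensus_geometric_ergodicity
    (N : ℕ) (hN : 2 ≤ N) (W : Matrix (Fin N) (Fin N) ℝ)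
    (hnonneg : ∀ i j, 0 ≤ W i j)
    (hrow : ∀ i, ∑ j, W i j = 1)
    (hcol : ∀ j, ∑ i, W i j = 1)
    (hconn : ∀ i j, ∃ k : ℕ, 0 < (W ^ k) i j)
    (hσ : secondSingular W < 1) :
    ∀ (i : Fin N) (t : ℕ),
      ∑ τ ∈ Finset.Icc 1 t, ∑ j, |(W ^ (t - τ)) i j - 1 / N|
        ≤ 4 * Real.log N / (1 - secondSingular W) :=
  consensus_geometric_ergodicity_general N hN W hnonneg hrow hcol hσ
end
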